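/- arXiv:1803.10051 — 5 statements merged into one kernel-verified Lean document; each statement's English description precedes it below -/
import Mathlib

section
/- For every nonnegative integer n and all x, y (say rational numbers), one has the identity Σ_{k=0}^{n} C(n,k) · W_k(x) · y^{n-k} = W_n(x+y). -/
/-- `Wgen n x = Σ_{k=0}^{⌊n/3⌋} C(2k,k)·C(3k,k)·C(n,3k)·x^{n-3k}`. -/
def Wgen (n : ℕ) (x : ℚ) : ℚ :=
  ∑ k ∈ Finset.range (n / 3 + 1),
    (Nat.choose (2 * k) k : ℚ) * (Nat.choose (3 * k) k : ℚ) *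
      (Nat.choose n (3 * k) : ℚ) * x ^ (n - 3 * k)

/-!
`Wgen n` is a linear combination of the polynomials `C(n, m) x^(n-m)`, and each of these satisfies
the binomial shift rule `Σ_k C(n,k) C(k,m) x^(k-m) y^(n-k) = C(n,m) (x+y)^(n-m)`
(from `C(n,k) C(k,m) = C(n,m) C(n-m,k-m)` and the binomial theorem). Since `C(k,3j) = 0` for
`3j > k`, every `Wgen k` with `k ≤ n` may be summed over `j ≤ ⌊n/3⌋`, and the two sums exchanged.
-/

open Finset

theorem sum_choose_mul_choose_mul_pow {R : Type*} [CommSemiring R] {m n : ℕ} (h : m ≤ n)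
    (x y : R) :
    ∑ k ∈ range (n + 1), (n.choose k : R) * k.choose m * x ^ (k - m) * y ^ (n - k)
      = n.choose m * (x + y) ^ (n - m) := by
  obtain ⟨d, rfl⟩ := Nat.exists_eq_add_of_le h
  have hlow : ∑ k ∈ range m,
      ((m + d).choose k : R) * k.choose m * x ^ (k - m) * y ^ (m + d - k) = 0 :=
    sum_eq_zero fun k hk => by simp [Nat.choose_eq_zero_of_lt (mem_range.1 hk)]
  rw [add_assoc, sum_range_add, hlow, zero_add, Nat.add_sub_cancel_left, add_pow, mul_sum]
  refine sum_congr rfl fun i _ => ?_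
  have hchoose : ((m + d).choose (m + i) : R) * (m + i).choose m
      = (m + d).choose m * d.choose i := by
    rw [← Nat.cast_mul, Nat.choose_mul (Nat.le_add_right m i)]
    simp only [Nat.add_sub_cancel_left, Nat.cast_mul]
  rw [Nat.add_sub_cancel_left, show m + d - (m + i) = d - i by omega, hchoose]
  ring

theorem Wgen_eq_sum_range_of_div_le {n N : ℕ} (h : n / 3 ≤ N) (x : ℚ) :
    Wgen n x = ∑ j ∈ range (N + 1),
      (Nat.choose (2 * j) j : ℚ) * (Nat.choose (3 * j) j : ℚ) *
        (Nat.choose n (3 * j) : ℚ) * x ^ (n - 3 * j) :=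
  sum_subset (range_subset_range.2 (by omega)) fun j _ hj => by
    simp [Nat.choose_eq_zero_of_lt (show n < 3 * j by simp at hj; omega)]

theorem sum_choose_Wgen (n : ℕ) (x y : ℚ) :
    ∑ k ∈ Finset.range (n + 1), (Nat.choose n k : ℚ) * Wgen k x * y ^ (n - k)
      = Wgen n (x + y) := by
  have hexpand : ∀ k ∈ range (n + 1), (n.choose k : ℚ) * Wgen k x * y ^ (n - k)
      = ∑ j ∈ range (n / 3 + 1), ((2 * j).choose j : ℚ) * (3 * j).choose j *
          ((n.choose k : ℚ) * k.choose (3 * j) * x ^ (k - 3 * j) * y ^ (n - k)) := by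
    intro k hk
    rw [Wgen_eq_sum_range_of_div_le (N := n / 3) (by simp at hk; omega), mul_sum, sum_mul]
    exact sum_congr rfl fun j _ => by ring
  rw [sum_congr rfl hexpand, sum_comm, Wgen]
  refine sum_congr rfl fun j hj => ?_
  rw [← mul_sum, sum_choose_mul_choose_mul_pow (by simp at hj; omega)]
  ring
end

section
/- Let p > 3 be a prime and let m, x be rational numbers whose denominators are not divisible by p, with m·x ≢ 0 (mod p). Then Σ_{k=0}^{p-1} W_k(x+m)/m^k ≡ W_{p-1}(x) (mod p) and W_{p-1}(x) ≡ Σ_{k=0}^{p-1} C(2k,k)·C(3k,k)/(-x)^{3k} (mod p). -/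
/-- A rational number is `p`-integral if `p` does not divide its denominator
(in lowest terms). -/
def pIntegral (p : ℕ) (a : ℚ) : Prop := ¬ (p : ℕ) ∣ a.den

/-- For `p`-integral rationals `a, b`, `a ≡ b (mod p)` means that `p` divides
the numerator of `a - b` in lowest terms. -/
def ratCongr (p : ℕ) (a b : ℚ) : Prop := (p : ℤ) ∣ (a - b).num

open Finset

def W {R : Type*} [Semiring R] (n : ℕ) (x : R) : R :=
  ∑ k ∈ range (n / 3 + 1),
    (Nat.choose (2 * k) k : R) * (Nat.choose (3 * k) k : R) * (Nat.choose n (3 * k) : R) *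
      x ^ (n - 3 * k)

theorem W_eq_sum_range_of_le {R : Type*} [Semiring R] {n N : ℕ} (h : n ≤ N) (x : R) :
    W n x = ∑ k ∈ range (N / 3 + 1),
      (Nat.choose (2 * k) k : R) * (Nat.choose (3 * k) k : R) * (Nat.choose n (3 * k) : R) *
        x ^ (n - 3 * k) := by
  refine sum_subset (range_subset_range.2 (by omega)) fun k _ hk => ?_
  rw [mem_range] at hk
  simp [Nat.choose_eq_zero_of_lt (show n < 3 * k by omega)]

namespace ZMod

open Nat

variable {p : ℕ} [hp : Fact p.Prime]

theorem factorial_ne_zero {n : ℕ} (hn : n < p) : (n ! : ZMod p) ≠ 0 := by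
  rw [Ne, ZMod.natCast_eq_zero_iff, hp.out.dvd_factorial]
  omega

theorem cast_choose_add {r t : ℕ} (h : r + t < p) :
    ((t + r).choose r : ZMod p) = (-1) ^ t * (p - 1 - r).choose t := by
  have hdesc : ((p - 1 - r).descFactorial t : ZMod p) = (-1) ^ t * (r + 1).ascFactorial t := by
    rw [descFactorial_eq_prod_range, ascFactorial_eq_prod_range]
    push_cast
    rw [show (-1 : ZMod p) ^ t = (-1) ^ #(range t) by rw [card_range], pow_card_mul_prod]
    refine prod_congr rfl fun i hi => ?_
    rw [mem_range] at hi
    rw [show p - 1 - r - i = p - (r + 1 + i) by omega, Nat.cast_sub (by omega),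
      CharP.cast_eq_zero]
    push_cast
    ring
  rw [descFactorial_eq_factorial_mul_choose, ascFactorial_eq_factorial_mul_choose,
    add_comm r t] at hdesc
  rw [← choose_symm_add]
  push_cast at hdesc
  have hsq : ((-1) ^ t * (-1) ^ t : ZMod p) = 1 := by rw [← mul_pow, neg_one_mul, neg_neg, one_pow]
  refine mul_left_cancel₀ (factorial_ne_zero (p := p) (n := t) (by omega)) ?_
  linear_combination (-(-1) ^ t : ZMod p) * hdesc - (t ! * (t + r).choose t : ZMod p) * hsq

theorem cast_choose_sub_one {k : ℕ} (hk : k < p) : ((p - 1).choose k : ZMod p) = (-1) ^ k := by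
  have h := cast_descFactorial (p := p) (n := k) hk.le
  rw [descFactorial_eq_factorial_mul_choose, Nat.cast_mul, mul_comm ((-1) ^ k : ZMod p)] at h
  exact mul_left_cancel₀ (factorial_ne_zero hk) h

theorem sum_range_choose_add_mul_pow {r : ℕ} (hr : r < p) (u : ZMod p) :
    ∑ t ∈ range (p - r), ((t + r).choose r : ZMod p) * u ^ t = (1 - u) ^ (p - 1 - r) := by
  rw [sub_eq_neg_add, add_pow, show p - r = p - 1 - r + 1 by omega]
  refine sum_congr rfl fun t ht => ?_
  rw [mem_range] at ht
  rw [cast_choose_add (by omega), one_pow, mul_one, neg_pow]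
  ring

theorem pow_sub_one_sub {v : ZMod p} (hv : v ≠ 0) {r : ℕ} (hr : r < p) :
    v ^ (p - 1 - r) = (v ^ r)⁻¹ := by
  refine eq_inv_of_mul_eq_one_left ?_
  rw [← pow_add, Nat.sub_add_cancel (by omega), pow_card_sub_one_eq_one hv]

theorem sum_range_choose_mul_pow_div_pow {M X : ZMod p} (hM : M ≠ 0) (hX : X ≠ 0) {r : ℕ}
    (hr : r < p) :
    ∑ k ∈ range p, (k.choose r : ZMod p) * (X + M) ^ (k - r) / M ^ k = ((-X) ^ r)⁻¹ := by
  rw [← sum_range_add_sum_Ico _ hr.le, sum_Ico_eq_sum_range]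
  have hlow : ∑ k ∈ range r, (k.choose r : ZMod p) * (X + M) ^ (k - r) / M ^ k = 0 :=
    sum_eq_zero fun k hk => by simp [choose_eq_zero_of_lt (mem_range.1 hk)]
  have hterm : ∀ t, ((r + t).choose r : ZMod p) * (X + M) ^ (r + t - r) / M ^ (r + t)
      = ((t + r).choose r : ZMod p) * ((X + M) / M) ^ t / M ^ r := by
    intro t
    rw [add_comm r t, Nat.add_sub_cancel, pow_add, div_pow]
    field_simp
  have hone : 1 - (X + M) / M = -X / M := by field_simp; ring
  rw [hlow, zero_add, sum_congr rfl fun t _ => hterm t, ← sum_div,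
    sum_range_choose_add_mul_pow hr, hone, pow_sub_one_sub (div_ne_zero (neg_ne_zero.2 hX) hM) hr,
    div_pow, inv_div, div_right_comm, div_self (pow_ne_zero r hM), one_div]

theorem choose_two_mul_mul_choose_three_mul_eq_zero {k : ℕ} (hk : k < p) (hpk : p ≤ 3 * k) :
    ((2 * k).choose k : ZMod p) * ((3 * k).choose k : ZMod p) = 0 := by
  rw [← Nat.cast_mul, ZMod.natCast_eq_zero_iff]
  rcases le_or_gt p (2 * k) with h | h
  · exact dvd_mul_of_dvd_left (hp.out.dvd_choose hk (by omega) h) _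
  · exact dvd_mul_of_dvd_right (hp.out.dvd_choose hk (by omega) hpk) _

theorem sum_range_div_three_succ_eq_sum_range {g : ℕ → ZMod p} :
    ∑ k ∈ range ((p - 1) / 3 + 1), ((2 * k).choose k : ZMod p) * ((3 * k).choose k : ZMod p) / g k
      = ∑ k ∈ range p, ((2 * k).choose k : ZMod p) * ((3 * k).choose k : ZMod p) / g k := by
  have := hp.out.pos
  refine sum_subset (range_subset_range.2 (by omega)) fun k hk hk' => ?_
  rw [mem_range] at hk hk'
  rw [choose_two_mul_mul_choose_three_mul_eq_zero hk (by omega), zero_div]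

theorem W_sub_one_eq_sum {X : ZMod p} (hX : X ≠ 0) :
    W (p - 1) X = ∑ k ∈ range p, ((2 * k).choose k : ZMod p) * ((3 * k).choose k : ZMod p) /
      (-X) ^ (3 * k) := by
  rw [← sum_range_div_three_succ_eq_sum_range]
  refine sum_congr rfl fun k hk => ?_
  have hk : 3 * k < p := by have := hp.out.pos; rw [mem_range] at hk; omega
  rw [cast_choose_sub_one hk, pow_sub_one_sub hX hk, neg_pow X, div_eq_mul_inv, mul_inv,
    ← inv_pow (-1 : ZMod p), inv_neg_one]
  ring

theorem sum_W_add_div_pow_eq_sum {M X : ZMod p} (hM : M ≠ 0) (hX : X ≠ 0) :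
    ∑ n ∈ range p, W n (X + M) / M ^ n = ∑ k ∈ range p,
      ((2 * k).choose k : ZMod p) * ((3 * k).choose k : ZMod p) / (-X) ^ (3 * k) := by
  rw [← sum_range_div_three_succ_eq_sum_range]
  calc ∑ n ∈ range p, W n (X + M) / M ^ n
      = ∑ n ∈ range p, ∑ k ∈ range ((p - 1) / 3 + 1),
          ((2 * k).choose k : ZMod p) * ((3 * k).choose k : ZMod p) *
            ((n.choose (3 * k) : ZMod p) * (X + M) ^ (n - 3 * k) / M ^ n) := by
        refine sum_congr rfl fun n hn => ?_
        rw [W_eq_sum_range_of_le (show n ≤ p - 1 by rw [mem_range] at hn; omega), sum_div]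
        simp only [mul_div_assoc, mul_assoc]
    _ = _ := by
        rw [sum_comm]
        refine sum_congr rfl fun k hk => ?_
        have := hp.out.pos
        rw [← mul_sum, sum_range_choose_mul_pow_div_pow hM hX (by rw [mem_range] at hk; omega),
          div_eq_mul_inv]

end ZMod

section Reduction

variable {p : ℕ} [hp : Fact p.Prime] {a b : ℚ}

theorem pIntegral.add (ha : pIntegral p a) (hb : pIntegral p b) : pIntegral p (a + b) :=
  fun h => (hp.out.dvd_mul.1 (h.trans (Rat.add_den_dvd a b))).elim ha hb

theorem pIntegral.mul (ha : pIntegral p a) (hb : pIntegral p b) : pIntegral p (a * b) :=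
  fun h => (hp.out.dvd_mul.1 (h.trans (Rat.mul_den_dvd a b))).elim ha hb

theorem pIntegral.inv (ha : ¬ (p : ℤ) ∣ a.num) : pIntegral p a⁻¹ := by
  unfold pIntegral
  rw [Rat.den_inv]
  split_ifs
  · exact hp.out.not_dvd_one
  · exact fun h => ha (Int.natCast_dvd.2 h)

variable (p) in
def ReducesTo (a : ℚ) (z : ZMod p) : Prop := pIntegral p a ∧ (a : ZMod p) = z

variable {y z : ZMod p}

theorem ReducesTo.den_ne_zero (ha : ReducesTo p a y) : (a.den : ZMod p) ≠ 0 :=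
  mt (ZMod.natCast_eq_zero_iff _ _).1 ha.1

theorem reducesTo_natCast (n : ℕ) : ReducesTo p n n :=
  ⟨by simp [pIntegral, hp.out.ne_one], Rat.cast_natCast n⟩

theorem reducesTo_zero : ReducesTo p 0 0 := by simpa using reducesTo_natCast (p := p) 0

theorem ReducesTo.add (ha : ReducesTo p a y) (hb : ReducesTo p b z) :
    ReducesTo p (a + b) (y + z) :=
  ⟨ha.1.add hb.1, by rw [Rat.cast_add_of_ne_zero ha.den_ne_zero hb.den_ne_zero, ha.2, hb.2]⟩

theorem ReducesTo.mul (ha : ReducesTo p a y) (hb : ReducesTo p b z) :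
    ReducesTo p (a * b) (y * z) :=
  ⟨ha.1.mul hb.1, by rw [Rat.cast_mul_of_ne_zero ha.den_ne_zero hb.den_ne_zero, ha.2, hb.2]⟩

theorem ReducesTo.neg (ha : ReducesTo p a y) : ReducesTo p (-a) (-y) :=
  ⟨by simpa [pIntegral] using ha.1, by rw [Rat.cast_neg, ha.2]⟩

theorem ReducesTo.sub (ha : ReducesTo p a y) (hb : ReducesTo p b z) :
    ReducesTo p (a - b) (y - z) := by
  simpa only [sub_eq_add_neg] using ha.add hb.neg

theorem ReducesTo.pow (ha : ReducesTo p a y) (n : ℕ) : ReducesTo p (a ^ n) (y ^ n) := by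
  induction n with
  | zero => simpa using reducesTo_natCast (p := p) 1
  | succ n ih => simpa only [pow_succ] using ih.mul ha

theorem reducesTo_sum {ι : Type*} {s : Finset ι} {f : ι → ℚ} {g : ι → ZMod p}
    (h : ∀ i ∈ s, ReducesTo p (f i) (g i)) : ReducesTo p (∑ i ∈ s, f i) (∑ i ∈ s, g i) := by
  have := sum_induction (fun i => (f i, g i)) (fun q => ReducesTo p q.1 q.2)
    (fun _ _ => ReducesTo.add) reducesTo_zero h
  simpa only [Prod.fst_sum, Prod.snd_sum] using this

theorem ReducesTo.num_ne_zero (ha : ReducesTo p a y) (hy : y ≠ 0) : (a.num : ZMod p) ≠ 0 := by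
  rw [← ha.2, Rat.cast_def] at hy
  exact left_ne_zero_of_mul hy

theorem ReducesTo.dvd_num (ha : ReducesTo p a 0) : (p : ℤ) ∣ a.num := by
  have h := ha.2
  rw [Rat.cast_def, div_eq_zero_iff, or_iff_left ha.den_ne_zero] at h
  exact (ZMod.intCast_zmod_eq_zero_iff_dvd _ _).1 h

theorem ReducesTo.inv (ha : ReducesTo p a y) (hy : y ≠ 0) : ReducesTo p a⁻¹ y⁻¹ := by
  have hnum := ha.num_ne_zero hy
  refine ⟨pIntegral.inv fun h => hnum ?_, by rw [Rat.cast_inv_of_ne_zero hnum, ha.2]⟩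
  exact (ZMod.intCast_zmod_eq_zero_iff_dvd _ _).2 h

theorem ReducesTo.div (ha : ReducesTo p a y) (hb : ReducesTo p b z) (hz : z ≠ 0) :
    ReducesTo p (a / b) (y / z) := by
  simpa only [div_eq_mul_inv] using ha.mul (hb.inv hz)

theorem ReducesTo.ratCongr (ha : ReducesTo p a z) (hb : ReducesTo p b z) : ratCongr p a b :=
  (by simpa using ha.sub hb : ReducesTo p (a - b) 0).dvd_num

theorem ReducesTo.Wgen (ha : ReducesTo p a y) (n : ℕ) : ReducesTo p (Wgen n a) (W n y) :=
  reducesTo_sum fun _ _ =>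
    (((reducesTo_natCast _).mul (reducesTo_natCast _)).mul (reducesTo_natCast _)).mul (ha.pow _)

end Reduction

theorem sum_Wgen_congr_general (p : ℕ) (hp : p.Prime) (m x : ℚ)
    (hm : pIntegral p m) (hx : pIntegral p x)
    (hmx : ¬ ratCongr p (m * x) 0) :
    ratCongr p (∑ k ∈ Finset.range p, Wgen k (x + m) / m ^ k) (Wgen (p - 1) x) ∧
    ratCongr p (Wgen (p - 1) x)
      (∑ k ∈ Finset.range p,
        (Nat.choose (2 * k) k : ℚ) * (Nat.choose (3 * k) k : ℚ) / (-x) ^ (3 * k)) := by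
  have : Fact p.Prime := ⟨hp⟩
  have hmr : ReducesTo p m m := ⟨hm, rfl⟩
  have hxr : ReducesTo p x x := ⟨hx, rfl⟩
  obtain ⟨hM, hX⟩ : (m : ZMod p) ≠ 0 ∧ (x : ZMod p) ≠ 0 := mul_ne_zero_iff.1 fun h =>
    hmx ((h ▸ hmr.mul hxr).ratCongr reducesTo_zero)
  have hsum := reducesTo_sum (s := range p) fun k _ =>
    ((hxr.add hmr).Wgen k).div (hmr.pow k) (pow_ne_zero k hM)
  have hW := hxr.Wgen (p - 1)
  have hseries := reducesTo_sum (s := range p) fun k _ =>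
    ((reducesTo_natCast ((2 * k).choose k)).mul (reducesTo_natCast ((3 * k).choose k))).div
      (hxr.neg.pow (3 * k)) (pow_ne_zero _ (neg_ne_zero.2 hX))
  rw [ZMod.sum_W_add_div_pow_eq_sum hM hX] at hsum
  rw [ZMod.W_sub_one_eq_sum hX] at hW
  exact ⟨hsum.ratCongr hW, hW.ratCongr hseries⟩

theorem sum_Wgen_congr (p : ℕ) (hp : p.Prime) (hp3 : 3 < p) (m x : ℚ)
    (hm : pIntegral p m) (hx : pIntegral p x)
    (hmx : ¬ ratCongr p (m * x) 0) :
    ratCongr p (∑ k ∈ Finset.range p, Wgen k (x + m) / m ^ k) (Wgen (p - 1) x) ∧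
    ratCongr p (Wgen (p - 1) x)
      (∑ k ∈ Finset.range p,
        (Nat.choose (2 * k) k : ℚ) * (Nat.choose (3 * k) k : ℚ) / (-x) ^ (3 * k)) :=
  sum_Wgen_congr_general p hp m x hm hx hmx
end

section
/- Let r be a positive integer, c a nonzero integer, and b a polynomial with integer coefficients satisfying b(−1−n) = (−1)^r · b(n) for all integers n. Define the sequence (u_n) of rational numbers by u_0 = 1, u_1 = b(0), and (n+1)^r · u_{n+1} = b(n) · u_n − c · n^r · u_{n−1} for n ≥ 1. Let p be an odd prime with p ∤ c and suppose u_p is p-integral. Then u_0, …, u_{p−1} are p-integral, p does not divide u_{p−1}, and for every n ∈ {0, 1, …, p−1}: if u_{(p−1)/2} ≢ 0 (mod p) then u_n ≡ (c/p) · c^n · u_{p−1−n} (mod p), while if u_{(p−1)/2} ≡ 0 (mod p) then u_n ≡ (−1)^{r−1} · (c/p) · c^n · u_{p−1−n} (mod p). In particular, u_{p−1} ≡ (c/p) (mod p) in the first case and u_{p−1} ≡ (−1)^{r−1}·(c/p) (mod p) in the second case. -/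
section aux
variable (p : ℕ) [Fact p.Prime]

lemma pInt_intCast (x : ℤ) : pIntegral p ((x : ℚ)) := by
  simp only [pIntegral, Rat.den_intCast, Nat.dvd_one]
  exact (Fact.out : p.Prime).ne_one

lemma den_cast_ne (q : ℚ) (h : pIntegral p q) : ((q.den : ℕ) : ZMod p) ≠ 0 := by
  intro h0
  exact h ((ZMod.natCast_eq_zero_iff _ _).mp h0)

lemma key (q : ℚ) (m n : ℤ) (hn : (n : ZMod p) ≠ 0) (h : q * (n : ℚ) = (m : ℚ)) :
    pIntegral p q ∧ (q : ZMod p) = (m : ZMod p) / (n : ZMod p) := by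
  have hn0 : n ≠ 0 := by rintro rfl; simp at hn
  have hd0 : ((q.den : ℤ) : ℚ) ≠ 0 := by exact_mod_cast q.den_ne_zero
  have h3 : q.num * n = m * q.den := by
    have h2 : (q.num : ℚ) * n = m * q.den := by
      rw [← Rat.num_div_den q] at h
      field_simp at h
      linarith [h]
    exact_mod_cast h2
  have hdvd : (q.den : ℤ) ∣ n := by
    have h4 : (q.den : ℤ) ∣ q.num * n := ⟨m, by linarith [h3]⟩
    have h5 : q.den ∣ q.num.natAbs * n.natAbs := by
      have := Int.natAbs_dvd_natAbs.mpr h4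
      simpa [Int.natAbs_mul] using this
    have h6 : q.den ∣ n.natAbs := (Nat.Coprime.dvd_of_dvd_mul_left
      (Nat.Coprime.symm q.reduced) h5)
    exact dvd_trans (Int.ofNat_dvd.mpr h6) (Int.natAbs_dvd.mpr dvd_rfl)
  have hint : pIntegral p q := by
    intro hpd
    apply hn
    have : (p : ℤ) ∣ n := dvd_trans (Int.ofNat_dvd.mpr hpd) hdvd
    exact (ZMod.intCast_zmod_eq_zero_iff_dvd _ _).mpr this
  refine ⟨hint, ?_⟩
  have hdK : ((q.den : ℕ) : ZMod p) ≠ 0 := den_cast_ne p q hint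
  rw [Rat.cast_def]
  rw [div_eq_div_iff hdK hn]
  have := congrArg (fun x : ℤ => (x : ZMod p)) h3
  push_cast at this ⊢
  exact this

lemma pInt_int_mul (x : ℤ) (a : ℚ) (ha : pIntegral p a) :
    pIntegral p ((x : ℚ) * a) ∧ (((x : ℚ) * a : ℚ) : ZMod p) = (x : ZMod p) * (a : ZMod p) := by
  have hdK : ((a.den : ℕ) : ZMod p) ≠ 0 := den_cast_ne p a ha
  have hd0 : ((a.den : ℕ) : ℚ) ≠ 0 := by exact_mod_cast a.den_ne_zero
  have hna : (a.num : ℚ) = a * a.den := by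
    exact (div_eq_iff hd0).mp (Rat.num_div_den a)
  have h : ((x : ℚ) * a) * ((a.den : ℤ) : ℚ) = ((x * a.num : ℤ) : ℚ) := by
    push_cast
    rw [hna]; ring
  obtain ⟨h1, h2⟩ := key p _ _ _ (by exact_mod_cast hdK) h
  refine ⟨h1, ?_⟩
  rw [h2, Rat.cast_def]
  push_cast
  field_simp

lemma pInt_combo (x y : ℤ) (a b : ℚ) (ha : pIntegral p a) (hb : pIntegral p b) :
    pIntegral p ((x : ℚ) * a + (y : ℚ) * b) ∧
      (((x : ℚ) * a + (y : ℚ) * b : ℚ) : ZMod p)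
        = (x : ZMod p) * (a : ZMod p) + (y : ZMod p) * (b : ZMod p) := by
  have hdaK : ((a.den : ℕ) : ZMod p) ≠ 0 := den_cast_ne p a ha
  have hdbK : ((b.den : ℕ) : ZMod p) ≠ 0 := den_cast_ne p b hb
  have hda0 : ((a.den : ℕ) : ℚ) ≠ 0 := by exact_mod_cast a.den_ne_zero
  have hdb0 : ((b.den : ℕ) : ℚ) ≠ 0 := by exact_mod_cast b.den_ne_zero
  have hna : (a.num : ℚ) = a * a.den := by
    exact (div_eq_iff hda0).mp (Rat.num_div_den a)
  have hnb : (b.num : ℚ) = b * b.den := by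
    exact (div_eq_iff hdb0).mp (Rat.num_div_den b)
  have h : ((x : ℚ) * a + (y : ℚ) * b) * (((a.den : ℤ) * (b.den : ℤ) : ℤ) : ℚ)
      = ((x * a.num * b.den + y * b.num * a.den : ℤ) : ℚ) := by
    push_cast
    rw [hna, hnb]; ring
  obtain ⟨h1, h2⟩ := key p _ _ _ (by push_cast; exact mul_ne_zero hdaK hdbK) h
  refine ⟨h1, ?_⟩
  rw [h2, Rat.cast_def, Rat.cast_def]
  push_cast
  field_simp
  try ring

lemma cast_sub_eq (a c2 : ℚ) (ha : pIntegral p a) (hc : pIntegral p c2) :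
    pIntegral p (a - c2) ∧ ((a - c2 : ℚ) : ZMod p) = (a : ZMod p) - (c2 : ZMod p) := by
  obtain ⟨h1, h2⟩ := pInt_combo p 1 (-1) a c2 ha hc
  have e : ((1 : ℤ) : ℚ) * a + ((-1 : ℤ) : ℚ) * c2 = a - c2 := by push_cast; ring
  rw [e] at h1 h2
  refine ⟨h1, by rw [h2]; push_cast; ring⟩

lemma ratCongr_iff (a c2 : ℚ) (ha : pIntegral p a) (hc : pIntegral p c2) :
    ratCongr p a c2 ↔ (a : ZMod p) = (c2 : ZMod p) := by
  obtain ⟨h1, h2⟩ := cast_sub_eq p a c2 ha hc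
  have hdK : (((a - c2).den : ℕ) : ZMod p) ≠ 0 := den_cast_ne p _ h1
  constructor
  · intro h
    have : (((a - c2).num : ℤ) : ZMod p) = 0 := (ZMod.intCast_zmod_eq_zero_iff_dvd _ _).mpr h
    have h4 : ((a - c2 : ℚ) : ZMod p) = 0 := by
      rw [Rat.cast_def, this, zero_div]
    rw [h2] at h4
    exact sub_eq_zero.mp h4
  · intro h
    have h4 : ((a - c2 : ℚ) : ZMod p) = 0 := by rw [h2, h, sub_self]
    rw [Rat.cast_def, div_eq_zero_iff] at h4
    rcases h4 with h4 | h4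
    · exact (ZMod.intCast_zmod_eq_zero_iff_dvd _ _).mp h4
    · exact absurd h4 hdK

lemma nat_cast_ne (p : ℕ) [Fact p.Prime] (k : ℕ) (h0 : 0 < k) (h1 : k < p) :
    ((k : ℕ) : ZMod p) ≠ 0 := by
  intro h
  rw [ZMod.natCast_eq_zero_iff] at h
  exact absurd (Nat.le_of_dvd h0 h) (by omega)

lemma evalCongr (p : ℕ) [Fact p.Prime] (b : Polynomial ℤ) (x y : ℤ) (hxy : (p:ℤ) ∣ (x - y)) :
    ((b.eval x : ℤ) : ZMod p) = ((b.eval y : ℤ) : ZMod p) := by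
  have h1 : (p:ℤ) ∣ (b.eval x - b.eval y) := dvd_trans hxy (Polynomial.sub_dvd_eval_sub x y b)
  have h2 := (ZMod.intCast_zmod_eq_zero_iff_dvd _ _).mpr h1
  push_cast at h2
  exact sub_eq_zero.mp h2


theorem apery_like_reflection (r : ℕ) (hr : 0 < r) (c : ℤ) (hc : c ≠ 0)
    (b : Polynomial ℤ) (hb : ∀ n : ℤ, b.eval (-1 - n) = (-1) ^ r * b.eval n)
    (u : ℕ → ℚ) (hu0 : u 0 = 1) (hu1 : u 1 = ((b.eval 0 : ℤ) : ℚ))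
    (hrec : ∀ n : ℕ, 1 ≤ n →
      ((n : ℚ) + 1) ^ r * u (n + 1)
        = ((b.eval (n : ℤ) : ℤ) : ℚ) * u n - (c : ℚ) * (n : ℚ) ^ r * u (n - 1))
    (p : ℕ) [Fact p.Prime] (hodd : p ≠ 2) (hpc : ¬ (p : ℤ) ∣ c)
    (hup : pIntegral p (u p)) :
    (∀ n < p, pIntegral p (u n)) ∧
    ¬ ratCongr p (u (p - 1)) 0 ∧
    (∀ n < p,
      (¬ ratCongr p (u ((p - 1) / 2)) 0 →
        ratCongr p (u n) ((legendreSym p c : ℚ) * (c : ℚ) ^ n * u (p - 1 - n))) ∧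
      (ratCongr p (u ((p - 1) / 2)) 0 →
        ratCongr p (u n)
          ((-1 : ℚ) ^ (r - 1) * (legendreSym p c : ℚ) * (c : ℚ) ^ n * u (p - 1 - n)))) ∧
    (¬ ratCongr p (u ((p - 1) / 2)) 0 →
      ratCongr p (u (p - 1)) ((legendreSym p c : ℚ))) ∧
    (ratCongr p (u ((p - 1) / 2)) 0 →
      ratCongr p (u (p - 1)) ((-1 : ℚ) ^ (r - 1) * (legendreSym p c : ℚ))) := by
  have hp : p.Prime := Fact.out
  have hp3 : 3 ≤ p := by
    have h2 := hp.two_le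
    omega
  have hoddp : Odd p := hp.odd_of_ne_two hodd
  have hmid : 2 * ((p - 1) / 2) = p - 1 := by
    obtain ⟨k, hk⟩ := hoddp; omega
  have hC : (c : ZMod p) ≠ 0 := fun h => hpc ((ZMod.intCast_zmod_eq_zero_iff_dvd _ _).mp h)
  have hs : (-1 : ZMod p) ^ r * (-1 : ZMod p) ^ r = 1 := by
    rw [← mul_pow]; norm_num
  -- Step 1: p-integrality
  have hInt : ∀ n, n ≤ p - 1 → pIntegral p (u n) := by
    intro n
    induction n using Nat.strong_induction_on with
    | _ n ih =>
      intro hn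
      match n, ih, hn with
      | 0, _, _ => rw [hu0]; simpa using pInt_intCast p 1
      | 1, _, _ => rw [hu1]; exact pInt_intCast p _
      | (k+2), ih, hn =>
        have ha : pIntegral p (u (k+1)) := ih (k+1) (by omega) (by omega)
        have hbI : pIntegral p (u k) := ih k (by omega) (by omega)
        have hda0 : (((u (k+1)).den : ℕ) : ℚ) ≠ 0 := by exact_mod_cast (u (k+1)).den_ne_zero
        have hdb0 : (((u k).den : ℕ) : ℚ) ≠ 0 := by exact_mod_cast (u k).den_ne_zero
        have hna : ((u (k+1)).num : ℚ) = u (k+1) * (u (k+1)).den :=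
          (div_eq_iff hda0).mp (Rat.num_div_den _)
        have hnb : ((u k).num : ℚ) = u k * (u k).den :=
          (div_eq_iff hdb0).mp (Rat.num_div_den _)
        have e1 := hrec (k+1) (by omega)
        simp only [Nat.add_sub_cancel] at e1
        have hq : u (k+2) * (((((k:ℤ)+2)^r : ℤ) * (u (k+1)).den * (u k).den : ℤ) : ℚ)
            = ((b.eval ((k:ℤ)+1) * (u (k+1)).num * (u k).den
                - c * (((k:ℤ)+1)^r : ℤ) * (u k).num * (u (k+1)).den : ℤ) : ℚ) := by
          push_cast at e1 ⊢
          rw [hna, hnb]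
          linear_combination ((((u (k+1)).den : ℕ) : ℚ) * (((u k).den : ℕ) : ℚ)) * e1
        have hNK : (((((k:ℤ)+2)^r : ℤ) * (u (k+1)).den * (u k).den : ℤ) : ZMod p) ≠ 0 := by
          push_cast
          refine mul_ne_zero (mul_ne_zero (pow_ne_zero _ ?_) ?_) ?_
          · have := nat_cast_ne p (k+2) (by omega) (by omega)
            push_cast at this
            exact this
          · exact den_cast_ne p _ ha
          · exact den_cast_ne p _ hbI
        exact (key p _ _ _ hNK hq).1
  -- Step 2: recurrence in ZMod p
  have hrecK : ∀ k : ℕ, k + 2 ≤ p - 1 →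
      (((k:ℕ) : ZMod p) + 2) ^ r * (u (k+2) : ZMod p)
        = ((b.eval ((k:ℤ)+1) : ℤ) : ZMod p) * (u (k+1) : ZMod p)
          - (c : ZMod p) * (((k:ℕ) : ZMod p) + 1) ^ r * (u k : ZMod p) := by
    intro k hk
    have ha := hInt (k+2) (by omega)
    have hb1 := hInt (k+1) (by omega)
    have hb0 := hInt k (by omega)
    have e1 := hrec (k+1) (by omega)
    simp only [Nat.add_sub_cancel] at e1
    have eL : (((k+1 : ℕ) : ℚ) + 1) ^ r * u (k+2)
        = (((((k:ℤ)+2)^r : ℤ)) : ℚ) * u (k+2) := by push_cast; ring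
    have eR : ((b.eval ((k+1 : ℕ) : ℤ) : ℤ) : ℚ) * u (k+1)
          - (c : ℚ) * ((k+1 : ℕ) : ℚ) ^ r * u k
        = ((b.eval ((k:ℤ)+1) : ℤ) : ℚ) * u (k+1)
          + (((-(c * ((k:ℤ)+1)^r)) : ℤ) : ℚ) * u k := by push_cast; ring
    rw [eL, eR] at e1
    have e2 := congrArg (fun q : ℚ => (q : ZMod p)) e1
    rw [(pInt_int_mul p _ _ ha).2, (pInt_combo p _ _ _ _ hb1 hb0).2] at e2
    push_cast at e2 ⊢
    linear_combination e2
  -- Step 3: boundary relation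
  have hbd : ((b.eval 0 : ℤ) : ZMod p) * (u (p-1) : ZMod p)
      = (c : ZMod p) * (u (p-2) : ZMod p) := by
    have e1 := hrec (p-1) (by omega)
    have hidx : p - 1 + 1 = p := by omega
    have hidx2 : p - 1 - 1 = p - 2 := by omega
    rw [hidx, hidx2] at e1
    have hcast : ((p - 1 : ℕ) : ℚ) = (p : ℚ) - 1 := by
      push_cast [Nat.cast_sub (by omega : 1 ≤ p)]; ring
    have eL : (((p-1 : ℕ) : ℚ) + 1) ^ r * u p = ((((p:ℤ))^r : ℤ) : ℚ) * u p := by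
      rw [hcast]; push_cast; ring
    have hcastZ : ((p - 1 : ℕ) : ℤ) = (p : ℤ) - 1 := by omega
    have eR : ((b.eval ((p-1 : ℕ) : ℤ) : ℤ) : ℚ) * u (p-1)
          - (c : ℚ) * ((p-1 : ℕ) : ℚ) ^ r * u (p-2)
        = ((b.eval ((p:ℤ)-1) : ℤ) : ℚ) * u (p-1)
          + (((-(c * ((p:ℤ)-1)^r)) : ℤ) : ℚ) * u (p-2) := by
      rw [hcast, hcastZ]; push_cast; ring
    rw [eL, eR] at e1
    have e2 := congrArg (fun q : ℚ => (q : ZMod p)) e1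
    rw [(pInt_int_mul p _ _ hup).2,
      (pInt_combo p _ _ _ _ (hInt (p-1) (by omega)) (hInt (p-2) (by omega))).2] at e2
    have hp0 : ((p : ℤ) : ZMod p) = 0 := by exact_mod_cast ZMod.natCast_self p
    have hbev : ((b.eval ((p:ℤ)-1) : ℤ) : ZMod p)
        = (-1 : ZMod p) ^ r * ((b.eval 0 : ℤ) : ZMod p) := by
      have h1 : ((b.eval ((p:ℤ)-1) : ℤ) : ZMod p) = ((b.eval (-1) : ℤ) : ZMod p) := by
        apply evalCongr
        ring_nf
        exact ⟨1, by ring⟩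
      rw [h1]
      have h2 := hb 0
      norm_num at h2
      rw [h2]
      push_cast
      ring
    push_cast at e2
    rw [show ((p:ℕ) : ZMod p) = 0 from ZMod.natCast_self p] at e2
    rw [hbev] at e2
    simp only [zero_sub, zero_pow hr.ne', zero_mul] at e2
    have e3 : (-1 : ZMod p) ^ r * (((b.eval 0 : ℤ) : ZMod p) * (u (p-1) : ZMod p)
        - (c : ZMod p) * (u (p-2) : ZMod p)) = 0 := by
      linear_combination -e2
    have e4 := mul_eq_zero.mp e3
    rcases e4 with h | h
    · exact absurd h (pow_ne_zero _ (neg_ne_zero.mpr one_ne_zero))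
    · linear_combination h
  -- Step 4: W-recurrence
  have hWrecK : ∀ k : ℕ, k + 2 ≤ p - 1 →
      (((k:ℕ) : ZMod p) + 2) ^ r * ((c : ZMod p)^(k+2) * (u (p-1-(k+2)) : ZMod p))
        = ((b.eval ((k:ℤ)+1) : ℤ) : ZMod p) * ((c : ZMod p)^(k+1) * (u (p-1-(k+1)) : ZMod p))
          - (c : ZMod p) * (((k:ℕ) : ZMod p) + 1) ^ r * ((c : ZMod p)^k * (u (p-1-k) : ZMod p)) := by
    intro k hk
    have e := hrecK (p-3-k) (by omega)
    have j1 : p-3-k+2 = p-1-k := by omega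
    have j2 : p-3-k+1 = p-2-k := by omega
    rw [j1, j2] at e
    have i3 : p-1-(k+2) = p-3-k := by omega
    have i2 : p-1-(k+1) = p-2-k := by omega
    rw [i3, i2]
    have hc1 : ((p-3-k : ℕ) : ZMod p) = -3 - (k : ZMod p) := by
      have hn : p-3-k = p-(3+k) := by omega
      rw [hn, Nat.cast_sub (by omega : 3+k ≤ p), ZMod.natCast_self]
      push_cast
      ring
    have hb1 : ((p-3-k : ℕ) : ZMod p) + 2 = -((k : ZMod p)+1) := by rw [hc1]; ring
    have hb2 : ((p-3-k : ℕ) : ZMod p) + 1 = -((k : ZMod p)+2) := by rw [hc1]; ring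
    rw [hb1, hb2, neg_pow ((k : ZMod p)+1), neg_pow ((k : ZMod p)+2)] at e
    have hBe : ((b.eval (((p-3-k : ℕ) : ℤ)+1) : ℤ) : ZMod p)
        = (-1 : ZMod p)^r * ((b.eval ((k:ℤ)+1) : ℤ) : ZMod p) := by
      have h1 : ((b.eval (((p-3-k : ℕ) : ℤ)+1) : ℤ) : ZMod p)
          = ((b.eval (-1-((k:ℤ)+1)) : ℤ) : ZMod p) := by
        apply evalCongr
        refine ⟨1, by push_cast; omega⟩
      rw [h1, hb ((k:ℤ)+1)]
      push_cast
      ring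
    rw [hBe] at e
    linear_combination ((-1 : ZMod p)^r * (c : ZMod p)^(k+1)) * e
      - ((((k : ZMod p))+2)^r * (c : ZMod p)^(k+2) * (u (p-3-k) : ZMod p)
         - ((b.eval ((k:ℤ)+1) : ℤ) : ZMod p) * (c : ZMod p)^(k+1) * (u (p-2-k) : ZMod p)
         + (c : ZMod p)^(k+1) * (((k : ZMod p))+1)^r * (u (p-1-k) : ZMod p)) * hs
  -- Step 5: proportionality
  have hprop : ∀ k, k ≤ p - 1 →
      (c : ZMod p)^k * (u (p-1-k) : ZMod p) = (u (p-1) : ZMod p) * (u k : ZMod p) := by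
    intro k
    induction k using Nat.strong_induction_on with
    | _ k ih =>
      intro hk
      match k, ih, hk with
      | 0, _, _ =>
        rw [hu0]
        simp
      | 1, _, _ =>
        have i1 : p - 1 - 1 = p - 2 := by omega
        rw [i1, hu1, pow_one]
        rw [Rat.cast_intCast]
        rw [← hbd]
        ring
      | (k+2), ih, hk =>
        have ih1 := ih (k+1) (by omega) (by omega)
        have ih0 := ih k (by omega) (by omega)
        have e1 := hWrecK k (by omega)
        have e2 := hrecK k (by omega)
        rw [ih1, ih0] at e1
        have hne : (((k:ℕ) : ZMod p) + 2) ^ r ≠ 0 := by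
          apply pow_ne_zero
          have := nat_cast_ne p (k+2) (by omega) (by omega)
          push_cast at this
          exact this
        apply mul_left_cancel₀ hne
        linear_combination e1 - (u (p-1) : ZMod p) * e2
  -- Step 6: t^2 = 1
  have ht2 : (u (p-1) : ZMod p) * (u (p-1) : ZMod p) = 1 := by
    have h := hprop (p-1) le_rfl
    rw [Nat.sub_self] at h
    rw [hu0] at h
    rw [Rat.cast_one, mul_one] at h
    rw [← h]
    exact ZMod.pow_card_sub_one_eq_one hC
  have htne : (u (p-1) : ZMod p) ≠ 0 := by
    intro h; rw [h, zero_mul] at ht2; exact zero_ne_one ht2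
  -- Step 7: legendre
  have hleg : ((legendreSym p c : ℤ) : ZMod p) = (c : ZMod p) ^ ((p-1)/2) := by
    have := legendreSym.eq_pow p c
    have hq : p / 2 = (p - 1) / 2 := by omega
    rw [hq] at this
    exact_mod_cast this
  have hε2 : ((legendreSym p c : ℤ) : ZMod p) * ((legendreSym p c : ℤ) : ZMod p) = 1 := by
    have h := legendreSym.sq_one p (a := c) hC
    have h2 := congrArg (fun z : ℤ => (z : ZMod p)) h
    push_cast at h2
    linear_combination h2
  have hm : p - 1 - (p-1)/2 = (p-1)/2 := by omega
  have hmk : (c : ZMod p)^((p-1)/2) * (u ((p-1)/2) : ZMod p)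
      = (u (p-1) : ZMod p) * (u ((p-1)/2) : ZMod p) := by
    have hpr := hprop ((p-1)/2) (by omega)
    rwa [hm] at hpr
  have hcongr0 : ∀ q : ℚ, pIntegral p q → (ratCongr p q 0 ↔ (q : ZMod p) = 0) := by
    intro q hq
    have h := ratCongr_iff p q 0 hq (by simpa using pInt_intCast p 0)
    simpa using h
  have hInt2 : ∀ n < p, pIntegral p (u n) := fun n hn => hInt n (by omega)
  have hmidInt := hInt ((p-1)/2) (by omega)
  have hmidIff := hcongr0 _ hmidInt
  have hpm1Int := hInt (p-1) (by omega)
  -- case A : midpoint nonzero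
  have caseA : (u ((p-1)/2) : ZMod p) ≠ 0 →
      (u (p-1) : ZMod p) = ((legendreSym p c : ℤ) : ZMod p) := by
    intro h
    apply mul_right_cancel₀ h
    rw [hleg]
    exact hmk.symm
  -- case B : midpoint zero
  have caseB : (u ((p-1)/2) : ZMod p) = 0 →
      (u (p-1) : ZMod p) = (-1 : ZMod p)^(r-1) * ((legendreSym p c : ℤ) : ZMod p) := by
    intro h0
    have hm1 : 1 ≤ (p-1)/2 := by omega
    have hUm1 : (u ((p-1)/2 - 1) : ZMod p) ≠ 0 := by
      intro hz
      have hall : ∀ j, (p-1)/2 - 1 + j ≤ p - 1 → (u ((p-1)/2 - 1 + j) : ZMod p) = 0 := by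
        intro j
        induction j using Nat.strong_induction_on with
        | _ j ih =>
          intro hj
          match j, ih, hj with
          | 0, _, _ => simpa using hz
          | 1, _, _ =>
            rw [show (p-1)/2 - 1 + 1 = (p-1)/2 from by omega]
            exact h0
          | (j+2), ih, hj =>
            have e := hrecK ((p-1)/2 - 1 + j) (by omega)
            have i1 : (p-1)/2 - 1 + j + 1 = (p-1)/2 - 1 + (j+1) := by omega
            have i2 : (p-1)/2 - 1 + j + 2 = (p-1)/2 - 1 + (j+2) := by omega
            rw [i1, i2] at e
            rw [ih (j+1) (by omega) (by omega), ih j (by omega) (by omega)] at e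
            simp only [mul_zero, zero_mul, sub_zero] at e
            have hne2 : ((((p-1)/2 - 1 + j : ℕ) : ZMod p) + 2)^r ≠ 0 := by
              apply pow_ne_zero
              intro hq
              have hcc := nat_cast_ne p ((p-1)/2 - 1 + j + 2) (by omega) (by omega)
              apply hcc
              push_cast at hq ⊢
              linear_combination hq
            exact (mul_eq_zero.mp e).resolve_left hne2
      have hend := hall (p - (p-1)/2) (by omega)
      rw [show (p-1)/2 - 1 + (p - (p-1)/2) = p - 1 from by omega] at hend
      exact htne hend
    have e := hrecK ((p-1)/2 - 1) (by omega)
    rw [show (p-1)/2 - 1 + 1 = (p-1)/2 from by omega,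
      show (p-1)/2 - 1 + 2 = (p-1)/2 + 1 from by omega] at e
    rw [h0] at e
    have hcm : (((p-1)/2 - 1 : ℕ) : ZMod p) = (((p-1)/2 : ℕ) : ZMod p) - 1 := by
      rw [Nat.cast_sub hm1]; simp
    have hhalf : (((p-1)/2 : ℕ) : ZMod p) + 1 = -(((p-1)/2 : ℕ) : ZMod p) := by
      have hcc : ((2 * ((p-1)/2) + 1 : ℕ) : ZMod p) = 0 := by
        rw [show 2*((p-1)/2)+1 = p from by omega]; exact ZMod.natCast_self p
      push_cast at hcc
      linear_combination hcc
    have hb1 : (((p-1)/2 - 1 : ℕ) : ZMod p) + 2 = -(((p-1)/2 : ℕ) : ZMod p) := by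
      rw [hcm]; linear_combination hhalf
    have hb2 : (((p-1)/2 - 1 : ℕ) : ZMod p) + 1 = (((p-1)/2 : ℕ) : ZMod p) := by
      rw [hcm]; ring
    rw [hb1, hb2, neg_pow] at e
    simp only [mul_zero, zero_mul, zero_sub, sub_zero] at e
    have hmne : (((p-1)/2 : ℕ) : ZMod p) ≠ 0 := nat_cast_ne p _ (by omega) (by omega)
    have hpowne : (((p-1)/2 : ℕ) : ZMod p)^r ≠ 0 := pow_ne_zero _ hmne
    have e2 : (-1 : ZMod p)^r * (u ((p-1)/2 + 1) : ZMod p)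
        = -((c : ZMod p) * (u ((p-1)/2 - 1) : ZMod p)) := by
      apply mul_left_cancel₀ hpowne
      linear_combination e
    have hw := hprop ((p-1)/2 - 1) (by omega)
    rw [show p - 1 - ((p-1)/2 - 1) = (p-1)/2 + 1 from by omega] at hw
    have hrm : (-1 : ZMod p)^r = (-1 : ZMod p)^(r-1) * (-1) := by
      conv_lhs => rw [show r = (r-1)+1 from by omega]
      rw [pow_succ]
    have hleg' := hleg
    rw [show (p-1)/2 = ((p-1)/2 - 1) + 1 from by omega, pow_succ] at hleg'
    apply mul_right_cancel₀ hUm1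
    rw [← hw, hleg']
    linear_combination ((-1 : ZMod p)^r * (c : ZMod p)^((p-1)/2 - 1)) * e2
      - ((c : ZMod p)^((p-1)/2 - 1) * (u ((p-1)/2 + 1) : ZMod p)) * hs
      - ((c : ZMod p)^((p-1)/2 - 1) * (c : ZMod p) * (u ((p-1)/2 - 1) : ZMod p)) * hrm
  -- the main congruence in ZMod p
  have main : ∀ s : ZMod p, s * s = 1 →
      (u (p-1) : ZMod p) = s * ((legendreSym p c : ℤ) : ZMod p) →
      ∀ n < p, (u n : ZMod p)
        = s * ((legendreSym p c : ℤ) : ZMod p) * (c : ZMod p)^n * (u (p-1-n) : ZMod p) := by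
    intro s hss hts n hn
    have hw := hprop n (by omega)
    rw [hts] at hw
    linear_combination (-(s * ((legendreSym p c : ℤ) : ZMod p))) * hw
      - (u n : ZMod p) * ((legendreSym p c : ℤ) : ZMod p)
          * ((legendreSym p c : ℤ) : ZMod p) * hss
      - (u n : ZMod p) * hε2
  refine ⟨hInt2, ?_, ?_, ?_, ?_⟩
  · rw [hcongr0 _ hpm1Int]
    exact htne
  · intro n hn
    have hInt3 := hInt (p-1-n) (by omega)
    have hIntn := hInt n (by omega)
    constructor
    · intro hnc
      have hU : (u ((p-1)/2) : ZMod p) ≠ 0 := fun hzz => hnc (hmidIff.mpr hzz)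
      have hkey := main 1 (by ring) (by rw [caseA hU]; ring) n hn
      have e : (legendreSym p c : ℚ) * (c : ℚ)^n * u (p-1-n)
          = ((legendreSym p c * c^n : ℤ) : ℚ) * u (p-1-n) := by push_cast; ring
      rw [e]
      obtain ⟨hP, hCast⟩ := pInt_int_mul p (legendreSym p c * c^n) (u (p-1-n)) hInt3
      rw [ratCongr_iff p _ _ hIntn hP, hCast]
      push_cast
      linear_combination hkey
    · intro hcc
      have hU : (u ((p-1)/2) : ZMod p) = 0 := hmidIff.mp hcc
      have hss : ((-1 : ZMod p)^(r-1)) * ((-1 : ZMod p)^(r-1)) = 1 := by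
        rw [← mul_pow]; norm_num
      have hkey := main ((-1 : ZMod p)^(r-1)) hss (caseB hU) n hn
      have e : (-1 : ℚ)^(r-1) * (legendreSym p c : ℚ) * (c : ℚ)^n * u (p-1-n)
          = (((-1)^(r-1) * legendreSym p c * c^n : ℤ) : ℚ) * u (p-1-n) := by push_cast; ring
      rw [e]
      obtain ⟨hP, hCast⟩ := pInt_int_mul p ((-1)^(r-1) * legendreSym p c * c^n) (u (p-1-n)) hInt3
      rw [ratCongr_iff p _ _ hIntn hP, hCast]
      push_cast
      linear_combination hkey
  · intro hnc
    have hU : (u ((p-1)/2) : ZMod p) ≠ 0 := fun hzz => hnc (hmidIff.mpr hzz)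
    rw [ratCongr_iff p _ _ hpm1Int (pInt_intCast p _), Rat.cast_intCast]
    exact caseA hU
  · intro hcc
    have hU : (u ((p-1)/2) : ZMod p) = 0 := hmidIff.mp hcc
    have e : (-1 : ℚ)^(r-1) * (legendreSym p c : ℚ)
        = (((-1)^(r-1) * legendreSym p c : ℤ) : ℚ) := by push_cast; ring
    rw [e, ratCongr_iff p _ _ hpm1Int (pInt_intCast p _), Rat.cast_intCast]
    push_cast
    linear_combination caseB hU
end aux
end

section
/- Let r be a positive integer, c a nonzero integer, and b a polynomial with integer coefficients satisfying b(−1−n) = (−1)^r · b(n) for all integers n. Define the sequence (u_n) of rational numbers by u_0 = 1, u_1 = b(0), and (n+1)^r · u_{n+1} = b(n) · u_n − c · n^r · u_{n−1} for n ≥ 1. Let p be an odd prime and suppose u_m is p-integral for every nonnegative integer m. Then for every positive integer k and every n ∈ {0, 1, …, p−1}, u_{kp+n} ≡ u_{kp} · u_n (mod p). -/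
/-!
Reduce modulo `p`: the `p`-integral rationals lie in `ℤ_[p]`, and composing with the ring map
`ℤ_[p] → ZMod p` turns `(u_n)` into a sequence `(v_n)` over `𝔽_p` with the same recurrence.
There `kp = 0` and `r > 0`, so the recurrence at `kp` reads `v_{kp+1} = b(0) v_{kp}`;
as `b(kp + n) ≡ b(n)` and `(n + 1)^r` is invertible for `n + 1 < p`, the sequences
`n ↦ v_{kp+n}` and `n ↦ v_{kp} v_n` then agree by two-step induction.
-/

open Polynomial Function

theorem Polynomial.intCast_eval_eq_of_intCast_eq {R : Type*} [Ring R] (b : ℤ[X]) {x y : ℤ}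
    (h : (x : R) = y) : ((b.eval x : ℤ) : R) = b.eval y := by
  have (z : ℤ) : ((b.eval z : ℤ) : R) = (b.map (Int.castRingHom R)).eval (z : R) := by simp
  rw [this, this, h]

structure IsAperyLike {R : Type*} [CommRing R] (r : ℕ) (b : ℤ[X]) (c : ℤ) (v : ℕ → R) :
    Prop where
  zero : v 0 = 1
  one : v 1 = ((b.eval 0 : ℤ) : R)
  recurrence : ∀ n : ℕ, 1 ≤ n → ((n : R) + 1) ^ r * v (n + 1) =
    ((b.eval (n : ℤ) : ℤ) : R) * v n - c * (n : R) ^ r * v (n - 1)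

namespace IsAperyLike

variable {R S : Type*} [CommRing R] [CommRing S] {r : ℕ} {b : ℤ[X]} {c : ℤ} {v : ℕ → R}

theorem map (h : IsAperyLike r b c v) (f : R →+* S) : IsAperyLike r b c (f ∘ v) where
  zero := by simp [h.zero]
  one := by simp [h.one]
  recurrence n hn := by simpa using congrArg f (h.recurrence n hn)

theorem of_map {f : R →+* S} (hf : Injective f) (h : IsAperyLike r b c (f ∘ v)) :
    IsAperyLike r b c v where
  zero := hf (by simpa using h.zero)
  one := hf (by simpa using h.one)
  recurrence n hn := hf (by simpa using h.recurrence n hn)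

theorem add_eq_mul_of_natCast_eq_zero [IsDomain R] (h : IsAperyLike r b c v) (hr : 0 < r)
    {N : ℕ} (hN : 1 ≤ N) (hN0 : (N : R) = 0) :
    ∀ n : ℕ, (∀ j, 0 < j → j ≤ n → (j : R) ≠ 0) → v (N + n) = v N * v n := by
  have hb (m : ℕ) : ((b.eval ((N + m : ℕ) : ℤ) : ℤ) : R) = b.eval (m : ℤ) :=
    b.intCast_eval_eq_of_intCast_eq (by push_cast; rw [hN0, zero_add])
  refine Nat.twoStepInduction (by simp [h.zero]) (fun _ ↦ ?_) fun n ih₀ ih₁ hn ↦ ?_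
  · have hb0 : ((b.eval (N : ℤ) : ℤ) : R) = b.eval 0 := by simpa using hb 0
    have hstep := h.recurrence N hN
    rw [hN0, hb0, zero_pow hr.ne'] at hstep
    rw [h.one]
    simpa [mul_comm] using hstep
  · have hstep := h.recurrence (N + (n + 1)) (by omega)
    have hinit := h.recurrence (n + 1) (by omega)
    rw [hb] at hstep
    push_cast at hstep hinit ⊢
    rw [hN0, zero_add] at hstep
    rw [show N + (n + 1) + 1 = N + (n + 2) by omega, show N + (n + 1) - 1 = N + n by omega,
      ih₀ fun j hj hjn ↦ hn j hj (by omega), ih₁ fun j hj hjn ↦ hn j hj (by omega)] at hstep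
    have hunit : ((n : R) + 1 + 1) ^ r ≠ 0 :=
      pow_ne_zero r (by simpa [add_assoc, one_add_one_eq_two] using hn (n + 2) (by omega) le_rfl)
    apply mul_left_cancel₀ hunit
    linear_combination hstep - v N * hinit

theorem mul_add_eq_mul_of_charP [IsDomain R] {p : ℕ} [CharP R p] (h : IsAperyLike r b c v)
    (hr : 0 < r) {k n : ℕ} (hk : 0 < k) (hn : n < p) : v (k * p + n) = v (k * p) * v n :=
  h.add_eq_mul_of_natCast_eq_zero hr (Nat.mul_pos hk (by omega))
    ((CharP.cast_eq_zero_iff R p _).2 (dvd_mul_left p k)) n fun j hj hjn hj0 ↦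
      Nat.not_dvd_of_pos_of_lt hj (by omega) ((CharP.cast_eq_zero_iff R p j).1 hj0)

end IsAperyLike

theorem Padic.intCast_dvd_num_of_norm_lt_one {p : ℕ} [Fact p.Prime] {q : ℚ}
    (hq : ‖(q : ℚ_[p])‖ < 1) : (p : ℤ) ∣ q.num := by
  rw [← Padic.norm_intCast_lt_one_iff, ← Rat.cast_intCast, ← q.mul_den_eq_num]
  calc ‖((q * q.den : ℚ) : ℚ_[p])‖ = ‖(q : ℚ_[p])‖ * ‖((q.den : ℤ) : ℚ_[p])‖ := by
        push_cast; rw [norm_mul]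
    _ ≤ ‖(q : ℚ_[p])‖ * 1 := by gcongr; exact Padic.norm_int_le_one _
    _ < 1 := by rwa [mul_one]

theorem PadicInt.intCast_dvd_num_of_toZMod_eq_zero {p : ℕ} [Fact p.Prime] {x : ℤ_[p]} {q : ℚ}
    (hx : (x : ℚ_[p]) = q) (h : PadicInt.toZMod x = 0) : (p : ℤ) ∣ q.num := by
  rw [← RingHom.mem_ker, PadicInt.ker_toZMod, IsLocalRing.mem_maximalIdeal,
    PadicInt.mem_nonunits, ← PadicInt.padic_norm_e_of_padicInt, hx] at h
  exact Padic.intCast_dvd_num_of_norm_lt_one h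

theorem apery_like_mul_congr_general (r : ℕ) (hr : 0 < r) (c : ℤ) (b : Polynomial ℤ)
    (u : ℕ → ℚ) (hu0 : u 0 = 1) (hu1 : u 1 = ((b.eval 0 : ℤ) : ℚ))
    (hrec : ∀ n : ℕ, 1 ≤ n →
      ((n : ℚ) + 1) ^ r * u (n + 1)
        = ((b.eval (n : ℤ) : ℤ) : ℚ) * u n - (c : ℚ) * (n : ℚ) ^ r * u (n - 1))
    (p : ℕ) (hp : p.Prime)
    (hint : ∀ m : ℕ, pIntegral p (u m)) :
    ∀ k : ℕ, 0 < k → ∀ n < p, ratCongr p (u (k * p + n)) (u (k * p) * u n) := by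
  have : Fact p.Prime := ⟨hp⟩
  intro k hk n hn
  let U : ℕ → ℤ_[p] := fun m ↦ ⟨u m, Padic.norm_rat_le_one (hint m)⟩
  have hU : IsAperyLike r b c U := .of_map (f := PadicInt.Coe.ringHom) Subtype.coe_injective
    ((IsAperyLike.mk hu0 hu1 hrec).map (Rat.castHom ℚ_[p]))
  have hmod := (hU.map PadicInt.toZMod).mul_add_eq_mul_of_charP hr hk hn
  refine PadicInt.intCast_dvd_num_of_toZMod_eq_zero (x := U (k * p + n) - U (k * p) * U n)
    (by push_cast; rfl) ?_
  simpa [sub_eq_zero] using hmod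

theorem apery_like_mul_congr (r : ℕ) (hr : 0 < r) (c : ℤ) (hc : c ≠ 0)
    (b : Polynomial ℤ) (hb : ∀ n : ℤ, b.eval (-1 - n) = (-1) ^ r * b.eval n)
    (u : ℕ → ℚ) (hu0 : u 0 = 1) (hu1 : u 1 = ((b.eval 0 : ℤ) : ℚ))
    (hrec : ∀ n : ℕ, 1 ≤ n →
      ((n : ℚ) + 1) ^ r * u (n + 1)
        = ((b.eval (n : ℤ) : ℤ) : ℚ) * u n - (c : ℚ) * (n : ℚ) ^ r * u (n - 1))
    (p : ℕ) (hp : p.Prime) (hodd : p ≠ 2)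
    (hint : ∀ m : ℕ, pIntegral p (u m)) :
    ∀ k : ℕ, 0 < k → ∀ n < p, ratCongr p (u (k * p + n)) (u (k * p) * u n) :=
  apery_like_mul_congr_general r hr c b u hu0 hu1 hrec p hp hint
end

section
/- Let r be a positive integer, c a nonzero integer, and b a polynomial with integer coefficients satisfying b(−1−n) = (−1)^r · b(n) for all integers n. Define the sequence (u_n) of rational numbers by u_0 = 1, u_1 = b(0), and (n+1)^r · u_{n+1} = b(n) · u_n − c · n^r · u_{n−1} for n ≥ 1. Then for every positive integer n, Σ_{k=0}^{n−1} b(k) · (−c)^{n−1−k} · u_k² = n^r · u_n · u_{n−1}. Consequently, if p is an odd prime with p ∤ c and u_m is p-integral for every positive integer m, then Σ_{k=0}^{p−1} (b(k)/(−c)^k) · u_k² ≡ 0 (mod p^r). -/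
theorem sum_mul_neg_pow_mul_sq_eq_of_recurrence {R : Type*} [CommRing R] {a B u : ℕ → R} {C : R}
    (h₀ : a 1 * u 1 = B 0 * u 0)
    (hrec : ∀ n, a (n + 2) * u (n + 2) = B (n + 1) * u (n + 1) - C * a (n + 1) * u n) (n : ℕ) :
    ∑ k ∈ Finset.range (n + 1), B k * (-C) ^ (n - k) * u k ^ 2 = a (n + 1) * u (n + 1) * u n := by
  induction n with
  | zero => simp only [zero_add, Finset.sum_range_one]; linear_combination (-u 0) * h₀
  | succ n ih =>
    have hpow : ∀ k ∈ Finset.range (n + 1),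
        B k * (-C) ^ (n + 1 - k) * u k ^ 2 = -C * (B k * (-C) ^ (n - k) * u k ^ 2) := by
      intro k hk
      rw [Nat.sub_add_comm (Finset.mem_range_succ_iff.mp hk), pow_succ]
      ring
    rw [Finset.sum_range_succ, Finset.sum_congr rfl hpow, ← Finset.mul_sum, ih, Nat.sub_self]
    linear_combination (-u (n + 1)) * hrec n

theorem sum_div_pow_mul_sq_eq_of_recurrence {K : Type*} [Field K] {a B u : ℕ → K} {C : K}
    (hC : C ≠ 0) (h₀ : a 1 * u 1 = B 0 * u 0)
    (hrec : ∀ n, a (n + 2) * u (n + 2) = B (n + 1) * u (n + 1) - C * a (n + 1) * u n) (n : ℕ) :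
    ∑ k ∈ Finset.range (n + 1), B k / (-C) ^ k * u k ^ 2
      = a (n + 1) * u (n + 1) * u n / (-C) ^ n := by
  have hC' : -C ≠ 0 := neg_ne_zero.mpr hC
  rw [← sum_mul_neg_pow_mul_sq_eq_of_recurrence h₀ hrec, eq_div_iff (pow_ne_zero _ hC'),
    Finset.sum_mul]
  refine Finset.sum_congr rfl fun k hk => ?_
  rw [pow_sub₀ _ hC' (Finset.mem_range_succ_iff.mp hk)]
  field_simp

section pIntegral

variable {p : ℕ}

theorem pIntegral_mul (hp : p.Prime) {x y : ℚ} (hx : pIntegral p x) (hy : pIntegral p y) :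
    pIntegral p (x * y) := fun h => by
  rcases (Nat.Prime.dvd_mul hp).1 (h.trans (Rat.mul_den_dvd x y)) with h | h
  exacts [hx h, hy h]

theorem pIntegral_inv_intCast {d : ℤ} (hd : ¬ (p : ℤ) ∣ d) : pIntegral p (d : ℚ)⁻¹ := by
  intro h
  rw [Rat.inv_intCast_den] at h
  split_ifs at h with hd0
  · exact hd (hd0 ▸ dvd_zero _)
  · exact hd (Int.natCast_dvd.mpr h)

theorem pIntegral_div_intCast (hp : p.Prime) {x : ℚ} {d : ℤ} (hx : pIntegral p x)
    (hd : ¬ (p : ℤ) ∣ d) : pIntegral p (x / d) :=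
  pIntegral_mul hp hx (pIntegral_inv_intCast hd)

end pIntegral

theorem apery_like_sum_identity_general (r : ℕ) (c : ℤ)
    (b : Polynomial ℤ)
    (u : ℕ → ℚ) (hu0 : u 0 = 1) (hu1 : u 1 = ((b.eval 0 : ℤ) : ℚ))
    (hrec : ∀ n : ℕ, 1 ≤ n →
      ((n : ℚ) + 1) ^ r * u (n + 1)
        = ((b.eval (n : ℤ) : ℤ) : ℚ) * u n - (c : ℚ) * (n : ℚ) ^ r * u (n - 1)) :
    (∀ n : ℕ, 0 < n →
      ∑ k ∈ Finset.range n, ((b.eval (k : ℤ) : ℤ) : ℚ) * (-(c : ℚ)) ^ (n - 1 - k) * u k ^ 2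
        = (n : ℚ) ^ r * u n * u (n - 1)) ∧
    (∀ p : ℕ, p.Prime → p ≠ 2 → ¬ (p : ℤ) ∣ c → (∀ m : ℕ, 0 < m → pIntegral p (u m)) →
      ∃ t : ℚ, pIntegral p t ∧
        ∑ k ∈ Finset.range p, ((b.eval (k : ℤ) : ℤ) : ℚ) / (-(c : ℚ)) ^ k * u k ^ 2
          = (p : ℚ) ^ r * t) := by
  set a : ℕ → ℚ := fun n => (n : ℚ) ^ r
  set B : ℕ → ℚ := fun k => ((b.eval (k : ℤ) : ℤ) : ℚ)
  have h₀ : a 1 * u 1 = B 0 * u 0 := by simp [a, B, hu0, hu1]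
  have hrec' : ∀ n, a (n + 2) * u (n + 2) = B (n + 1) * u (n + 1) - c * a (n + 1) * u n :=
    fun n => by simpa [a, B, add_assoc, one_add_one_eq_two] using hrec (n + 1) n.succ_pos
  refine ⟨fun n hn => ?_, fun p hp _ hpc hu => ?_⟩
  · obtain ⟨n, rfl⟩ := Nat.exists_eq_add_one_of_ne_zero hn.ne'
    simpa [a, B] using sum_mul_neg_pow_mul_sq_eq_of_recurrence (a := a) (B := B) h₀ hrec' n
  · obtain ⟨m, rfl⟩ := Nat.exists_eq_add_one_of_ne_zero hp.ne_zero
    have hcm : ¬ (((m + 1 : ℕ) : ℤ)) ∣ (-c) ^ m := fun h =>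
      hpc (dvd_neg.mp ((Nat.prime_iff_prime_int.mp hp).dvd_of_dvd_pow h))
    refine ⟨u (m + 1) * u m / ((-c) ^ m : ℤ), pIntegral_div_intCast hp ?_ hcm, ?_⟩
    · have hm : 0 < m := Nat.succ_lt_succ_iff.mp hp.one_lt
      exact pIntegral_mul hp (hu _ m.succ_pos) (hu m hm)
    · have hc : (c : ℚ) ≠ 0 := Int.cast_ne_zero.mpr (by rintro rfl; simp at hpc)
      rw [sum_div_pow_mul_sq_eq_of_recurrence (a := a) (B := B) hc h₀ hrec' m]
      simp only [a]
      push_cast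
      ring

theorem apery_like_sum_identity (r : ℕ) (hr : 0 < r) (c : ℤ) (hc : c ≠ 0)
    (b : Polynomial ℤ) (hb : ∀ n : ℤ, b.eval (-1 - n) = (-1) ^ r * b.eval n)
    (u : ℕ → ℚ) (hu0 : u 0 = 1) (hu1 : u 1 = ((b.eval 0 : ℤ) : ℚ))
    (hrec : ∀ n : ℕ, 1 ≤ n →
      ((n : ℚ) + 1) ^ r * u (n + 1)
        = ((b.eval (n : ℤ) : ℤ) : ℚ) * u n - (c : ℚ) * (n : ℚ) ^ r * u (n - 1)) :
    (∀ n : ℕ, 0 < n →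
      ∑ k ∈ Finset.range n, ((b.eval (k : ℤ) : ℤ) : ℚ) * (-(c : ℚ)) ^ (n - 1 - k) * u k ^ 2
        = (n : ℚ) ^ r * u n * u (n - 1)) ∧
    (∀ p : ℕ, p.Prime → p ≠ 2 → ¬ (p : ℤ) ∣ c → (∀ m : ℕ, 0 < m → pIntegral p (u m)) →
      ∃ t : ℚ, pIntegral p t ∧
        ∑ k ∈ Finset.range p, ((b.eval (k : ℤ) : ℤ) : ℚ) / (-(c : ℚ)) ^ k * u k ^ 2
          = (p : ℚ) ^ r * t) :=
  apery_like_sum_identity_general r c b u hu0 hu1 hrec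
end
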